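/- Let 1 ≤ n < d be integers and let q be a positive integer. Let B_q ⊆ SL_d(ℤ) be any set containing exactly one element from each right coset Γ⁰(q)γ of Γ⁰(q) in SL_d(ℤ). Then the map B_q × GL_n(ℤ/qℤ) → M_{d×n}(ℤ/qℤ) sending (γ, U) to the reduction mod q of γ^{−1} multiplied by the d×n matrix (0; U) (top (d−n)×n block zero, bottom n×n block U) is injective, and its image is exactly the set R_q of q-primitive matrices in M_{d×n}(ℤ/qℤ). -/

import Mathlib

/-!
`ZMod q` has stable range one: if `a` and `b` are coprime then `a + t * b` is a unit for some
`t`. Hence any `q`-primitive `R` can be cleared column by column by row operations `1 + u vᵀ`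
with `u, v` of disjoint support, which lift to `SL_d(ℤ)`: this gives `σ ∈ SL_d(ℤ)` with
`σ R = (0; V)`, and `V` is invertible because the rows of `σ R` still span. Replacing `σ` by
the representative `γ ∈ B_q` of `Γ⁰(q)σ` keeps the top block zero, so `R = γ⁻¹ (0; U)`.
Conversely, if `γ⁻¹ (0; U) = γ'⁻¹ (0; U')` then the top-right block of `γ' γ⁻¹` kills
the invertible `U`, so `γ' γ⁻¹ ∈ Γ⁰(q)` and `γ = γ'`.
-/

noncomputable section

/-- The congruence subgroup `Γ⁰(q) ⊆ SL_d(ℤ)` (`d = (d−n) + n`): block matrices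
`(A B; ᵗC D)` whose top-right `(d−n)×n` block `B` vanishes mod `q`. -/
def Gamma0 (d n q : ℕ) : Set (Matrix.SpecialLinearGroup (Fin (d - n) ⊕ Fin n) ℤ) :=
  {γ | ∀ (i : Fin (d - n)) (j : Fin n), (q : ℤ) ∣ γ.val (Sum.inl i) (Sum.inr j)}

/-- The map `(γ, U) ↦ γ⁻¹·(0; U) mod q`. -/
def paramMap (d n q : ℕ)
    (x : Matrix.SpecialLinearGroup (Fin (d - n) ⊕ Fin n) ℤ ×
          (Matrix (Fin n) (Fin n) (ZMod q))ˣ) :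
    Matrix (Fin (d - n) ⊕ Fin n) (Fin n) (ZMod q) :=
  ((x.1⁻¹).val.map (Int.cast : ℤ → ZMod q)) *
    Matrix.fromRows (0 : Matrix (Fin (d - n)) (Fin n) (ZMod q))
      (x.2 : Matrix (Fin n) (Fin n) (ZMod q))

open Matrix

/- Write `b = v * g` with `v` a unit and `g ∣ N`. Then `a` is a unit mod `g`, it lifts to a unit
`w` mod `N`, and `w - a` is a multiple of `g`, hence of `b`. -/
theorem ZMod.exists_isUnit_add_mul_of_isCoprime {N : ℕ} [NeZero N] {a b : ZMod N}
    (h : IsCoprime a b) : ∃ t, IsUnit (a + t * b) := by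
  obtain ⟨g, hg, v, hv, rfl⟩ := ZMod.eq_unit_mul_divisor b
  have ha : IsUnit (ZMod.castHom hg (ZMod g) a) := by
    have := h.map (ZMod.castHom hg (ZMod g))
    rwa [map_mul, map_natCast, ZMod.natCast_self, mul_zero, isCoprime_zero_right] at this
  obtain ⟨w, hw⟩ := ZMod.unitsMap_surjective hg ha.unit
  obtain ⟨s, hs⟩ : g ∣ ((w : ZMod N) - a).val := by
    have hwa : ZMod.castHom hg (ZMod g) w = ZMod.castHom hg (ZMod g) a := by
      rw [← ha.unit_spec, ← hw]; rfl
    rw [← ZMod.natCast_eq_zero_iff, ← ZMod.cast_eq_val, ← ZMod.castHom_apply (h := hg),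
      map_sub, hwa, sub_self]
  have hs' : (w : ZMod N) - a = g * s := by
    rw [← ZMod.natCast_zmod_val ((w : ZMod N) - a), hs, Nat.cast_mul]
  refine ⟨hv.unit⁻¹ * s, ?_⟩
  convert w.isUnit using 1
  calc a + ↑hv.unit⁻¹ * s * (v * g) = a + (↑hv.unit⁻¹ * v) * (g * s) := by ring
    _ = w := by rw [IsUnit.val_inv_mul, one_mul, ← hs']; ring

namespace Matrix

variable {A : Type*} [CommRing A]

theorem span_range_eq_top_iff_surjective_vecMul {m κ : Type*} [Fintype m] (R : Matrix m κ A) :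
    Submodule.span A (Set.range fun i => R i) = ⊤ ↔ Function.Surjective R.vecMul := by
  rw [← row_def, ← range_vecMulLinear, LinearMap.range_eq_top]
  rfl

theorem surjective_vecMul_mul_of_isUnit {m κ : Type*} [Fintype m] [DecidableEq m]
    {G : Matrix m m A} (hG : IsUnit G) {R : Matrix m κ A} (hR : Function.Surjective R.vecMul) :
    Function.Surjective (G * R).vecMul := by
  have : (G * R).vecMul = R.vecMul ∘ G.vecMul := funext fun c => (vecMul_vecMul c G R).symm
  rw [this]
  exact hR.comp (vecMul_surjective_iff_isUnit.2 hG)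

theorem surjective_vecMul_fromRows_zero_iff {ι κ : Type*} [Fintype ι] [Fintype κ]
    [DecidableEq κ] {V : Matrix κ κ A} :
    Function.Surjective (fromRows (0 : Matrix ι κ A) V).vecMul ↔ IsUnit V := by
  rw [← vecMul_surjective_iff_isUnit]
  constructor
  · intro h t
    obtain ⟨c, hc⟩ := h t
    exact ⟨c ∘ Sum.inr, by simpa [vecMul_fromRows] using hc⟩
  · intro h t
    obtain ⟨c, hc⟩ := h t
    exact ⟨Sum.elim 0 c, by simpa [sumElim_vecMul_fromRows] using hc⟩

theorem surjective_vecMul_submatrix_succ {ι : Type*} [Fintype ι] {n : ℕ}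
    {R : Matrix (ι ⊕ Fin (n + 1)) (Fin (n + 1)) A} (hR : Function.Surjective R.vecMul)
    (hu : IsUnit (R (.inr 0) 0)) (hcol : ∀ i ≠ .inr 0, R i 0 = 0) :
    Function.Surjective (R.submatrix (Sum.map id Fin.succ) Fin.succ).vecMul := by
  intro t
  obtain ⟨c, hc⟩ := hR (Fin.cons 0 t)
  have hc0 : c (.inr 0) = 0 := by
    have h := congr_fun hc 0
    simp only [Fin.cons_zero, vecMul, dotProduct] at h
    rw [Fintype.sum_eq_single (.inr 0) fun i hi => by rw [hcol i hi, mul_zero]] at h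
    exact hu.mul_left_eq_zero.1 h
  refine ⟨c ∘ Sum.map id Fin.succ, funext fun j => ?_⟩
  have h := congr_fun hc j.succ
  simp only [Fin.cons_succ, vecMul, dotProduct, Fintype.sum_sum_type, Fin.sum_univ_succ,
    hc0, zero_mul, zero_add] at h
  simpa [vecMul, dotProduct, Fintype.sum_sum_type] using h

theorem toRows₁_mul_eq_zero {ι κ ν : Type*} [Fintype ι] [Fintype κ]
    {G : Matrix (ι ⊕ κ) (ι ⊕ κ) A} (hG : G.toBlocks₁₂ = 0) {X : Matrix (ι ⊕ κ) ν A}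
    (hX : X.toRows₁ = 0) : (G * X).toRows₁ = 0 := by
  rw [← fromBlocks_toBlocks G, ← fromRows_toRows X, fromBlocks_mul_fromRows, toRows₁_fromRows,
    hG, hX, Matrix.mul_zero, Matrix.zero_mul, add_zero]

theorem toBlocks₁₂_eq_zero_of_mul_fromRows_zero {ι κ : Type*} [Fintype ι] [Fintype κ]
    [DecidableEq κ]
    {G : Matrix (ι ⊕ κ) (ι ⊕ κ) A} {U : (Matrix κ κ A)ˣ} {V : Matrix κ κ A}
    (h : G * fromRows (0 : Matrix ι κ A) (U : Matrix κ κ A) = fromRows 0 V) :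
    G.toBlocks₁₂ = 0 := by
  rw [← fromBlocks_toBlocks G, fromBlocks_mul_fromRows] at h
  have h₁ := congr_arg toRows₁ h
  rw [toRows₁_fromRows, toRows₁_fromRows, Matrix.mul_zero, zero_add] at h₁
  calc G.toBlocks₁₂ = G.toBlocks₁₂ * (U * ↑U⁻¹ : Matrix κ κ A) := by
        rw [Units.mul_inv, Matrix.mul_one]
    _ = 0 := by rw [← Matrix.mul_assoc, h₁, Matrix.zero_mul]

namespace SpecialLinearGroup

variable {m κ : Type*} [Fintype m] [DecidableEq m] {q : ℕ}

theorem isUnit_coe (g : SpecialLinearGroup m A) : IsUnit (g : Matrix m m A) :=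
  (isUnit_iff_isUnit_det _).2 (by rw [det_coe]; exact isUnit_one)

theorem exists_map_eq_one_add_vecMulVec {u v : m → ZMod q} (huv : ∀ i, u i = 0 ∨ v i = 0) :
    ∃ γ : SpecialLinearGroup m ℤ,
      (map (Int.castRingHom (ZMod q)) γ).val = 1 + vecMulVec u v := by
  set u' : m → ℤ := fun i => (u i).cast
  set v' : m → ℤ := fun i => (v i).cast
  have hdot : v' ⬝ᵥ u' = 0 := Finset.sum_eq_zero fun i _ => by
    rcases huv i with h | h <;> simp [u', v', h]
  have hdet : det (1 + vecMulVec u' v') = 1 := by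
    rw [vecMulVec_eq Unit, det_one_add_replicateCol_mul_replicateRow, hdot, add_zero]
  refine ⟨⟨_, hdet⟩, ?_⟩
  change (1 + vecMulVec u' v').map (Int.castRingHom (ZMod q)) = _
  ext i j
  simp [u', v', Matrix.one_apply, vecMulVec_apply, apply_ite]

theorem exists_map_mul_submatrix_eq {m' o : Type*} [Fintype m'] [DecidableEq m'] [Fintype o]
    [DecidableEq o] (e : m ≃ m' ⊕ o) (γ : SpecialLinearGroup m' ℤ) :
    ∃ γ' : SpecialLinearGroup m ℤ, ∀ R : Matrix m κ (ZMod q),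
      ((map (Int.castRingHom (ZMod q)) γ').val * R).submatrix (e.symm ∘ Sum.inl) id =
        (map (Int.castRingHom (ZMod q)) γ).val * R.submatrix (e.symm ∘ Sum.inl) id := by
  have hdet : det ((fromBlocks (γ : Matrix m' m' ℤ) 0 0 1).submatrix e e) = 1 := by
    rw [det_submatrix_equiv_self, det_fromBlocks_zero₂₁, det_one, mul_one, det_coe]
  refine ⟨⟨_, hdet⟩, fun R => ?_⟩
  change (((fromBlocks (γ : Matrix m' m' ℤ) 0 0 1).submatrix e e).map (Int.castRingHom (ZMod q))
    * R).submatrix _ _ = _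
  ext i j
  simp only [submatrix_apply, Function.comp_apply, id, mul_apply, map_apply]
  rw [← e.symm.sum_comp, Fintype.sum_sum_type]
  simp

theorem exists_map_mul_apply_eq_zero {R : Matrix m κ (ZMod q)} {p : m} {j : κ}
    (hu : IsUnit (R p j)) :
    ∃ γ : SpecialLinearGroup m ℤ, ((map (Int.castRingHom (ZMod q)) γ).val * R) p j = R p j ∧
      ∀ i ≠ p, ((map (Int.castRingHom (ZMod q)) γ).val * R) i j = 0 := by
  obtain ⟨γ, hγ⟩ := exists_map_eq_one_add_vecMulVec
    (u := Function.update (fun i => -(R i j * (R p j)⁻¹)) p 0) (v := Pi.single p 1) fun i => by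
      by_cases hi : i = p
      · subst hi; simp
      · simp [hi]
  refine ⟨γ, ?_, fun i hi => ?_⟩
  · simp [hγ, Matrix.add_mul, vecMulVec_mul, vecMulVec_apply, single_vecMul]
  · simp [hγ, Matrix.add_mul, vecMulVec_mul, vecMulVec_apply, single_vecMul, hi, mul_assoc,
      ZMod.inv_mul_of_unit _ hu]

variable [NeZero q]

/- With `c ᵥ* R = Pi.single j 1`, `R p j` is coprime to `b = 1 - c p * R p j`; adding
`t • ∑_{i ≠ p} c i • R i` to row `p` turns `R p j` into `R p j + t * b`. -/
theorem exists_isUnit_map_mul_apply [DecidableEq κ] {R : Matrix m κ (ZMod q)}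
    (hR : Function.Surjective R.vecMul) (p : m) (j : κ) :
    ∃ γ : SpecialLinearGroup m ℤ,
      IsUnit (((map (Int.castRingHom (ZMod q)) γ).val * R) p j) := by
  obtain ⟨c, hc⟩ := hR (Pi.single j 1)
  obtain ⟨t, ht⟩ := ZMod.exists_isUnit_add_mul_of_isCoprime (a := R p j) (b := 1 - c p * R p j)
    ⟨c p, 1, by ring⟩
  obtain ⟨γ, hγ⟩ := exists_map_eq_one_add_vecMulVec (u := Pi.single p 1)
    (v := t • (c - Pi.single p (c p))) fun i => by
      by_cases hi : i = p
      · subst hi; simp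
      · simp [hi]
  refine ⟨γ, ?_⟩
  rw [hγ, Matrix.add_mul, Matrix.one_mul, vecMulVec_mul]
  convert ht using 1
  simp [vecMulVec_apply, smul_vecMul, sub_vecMul, single_vecMul, hc]

theorem exists_isUnit_map_mul_apply_and_eq_zero [DecidableEq κ] {R : Matrix m κ (ZMod q)}
    (hR : Function.Surjective R.vecMul) (p : m) (j : κ) :
    ∃ γ : SpecialLinearGroup m ℤ,
      IsUnit (((map (Int.castRingHom (ZMod q)) γ).val * R) p j) ∧
        ∀ i ≠ p, ((map (Int.castRingHom (ZMod q)) γ).val * R) i j = 0 := by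
  obtain ⟨γ₁, hu⟩ := exists_isUnit_map_mul_apply hR p j
  obtain ⟨γ₂, hp, hi⟩ := exists_map_mul_apply_eq_zero hu
  refine ⟨γ₂ * γ₁, ?_, ?_⟩ <;> simp only [map_mul, coe_mul, Matrix.mul_assoc]
  · rwa [hp]
  · exact hi

theorem exists_map_mul_toRows₁_eq_zero {ι : Type*} [Fintype ι] [DecidableEq ι] {n : ℕ}
    {R : Matrix (ι ⊕ Fin n) (Fin n) (ZMod q)} (hR : Function.Surjective R.vecMul) :
    ∃ γ : SpecialLinearGroup (ι ⊕ Fin n) ℤ,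
      ((map (Int.castRingHom (ZMod q)) γ).val * R).toRows₁ = 0 := by
  induction n with
  | zero => exact ⟨1, by ext _ j; exact j.elim0⟩
  | succ n ih =>
    obtain ⟨γ₁, hu, hcol⟩ := exists_isUnit_map_mul_apply_and_eq_zero hR (.inr 0) 0
    set R₁ := (map (Int.castRingHom (ZMod q)) γ₁).val * R
    obtain ⟨γ₂, h₂⟩ := ih (surjective_vecMul_submatrix_succ
      (surjective_vecMul_mul_of_isUnit (isUnit_coe _) hR) hu hcol)
    -- splits off the pivot row `.inr 0`, on which the lift of `γ₂` acts as the identity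
    let e : ι ⊕ Fin (n + 1) ≃ (ι ⊕ Fin n) ⊕ Unit :=
      (Equiv.sumCongr (Equiv.refl ι) ((finSuccEquiv n).trans (Equiv.optionEquivSumPUnit _))).trans
        (Equiv.sumAssoc ι (Fin n) Unit).symm
    have he : e.symm ∘ Sum.inl = Sum.map id Fin.succ := by
      funext x; cases x <;> simp [e]
    obtain ⟨γ₃, h₃⟩ := exists_map_mul_submatrix_eq (q := q) (κ := Fin (n + 1)) e γ₂
    refine ⟨γ₃ * γ₁, ?_⟩
    ext i j
    have h := congr_fun (congr_fun (h₃ R₁) (.inl i)) j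
    rw [he] at h
    simp only [submatrix_apply, Sum.map_inl, id] at h
    rw [toRows₁_apply, map_mul, coe_mul, Matrix.mul_assoc, h]
    cases j using Fin.cases with
    | zero =>
      refine Finset.sum_eq_zero fun x _ => ?_
      simp only [submatrix_apply, id]
      rw [hcol _ (by cases x <;> simp), mul_zero]
    | succ j => exact congr_fun (congr_fun h₂ i) j

end SpecialLinearGroup

end Matrix

open Matrix.SpecialLinearGroup

section

variable {d n q : ℕ}

theorem mem_Gamma0_iff {γ : SpecialLinearGroup (Fin (d - n) ⊕ Fin n) ℤ} :
    γ ∈ Gamma0 d n q ↔ (map (Int.castRingHom (ZMod q)) γ).val.toBlocks₁₂ = 0 := by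
  simp [Gamma0, ← Matrix.ext_iff, toBlocks₁₂, ZMod.intCast_zmod_eq_zero_iff_dvd]

theorem one_mem_Gamma0 : 1 ∈ Gamma0 d n q := by
  simp [Gamma0, one_apply]

theorem paramMap_apply (γ : SpecialLinearGroup (Fin (d - n) ⊕ Fin n) ℤ)
    (U : (Matrix (Fin n) (Fin n) (ZMod q))ˣ) :
    paramMap d n q (γ, U) =
      (map (Int.castRingHom (ZMod q)) γ⁻¹).val *
        fromRows (0 : Matrix (Fin (d - n)) (Fin n) (ZMod q))
          (U : Matrix (Fin n) (Fin n) (ZMod q)) :=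
  rfl

theorem paramMap_eq_iff {γ : SpecialLinearGroup (Fin (d - n) ⊕ Fin n) ℤ}
    {U : (Matrix (Fin n) (Fin n) (ZMod q))ˣ}
    {R : Matrix (Fin (d - n) ⊕ Fin n) (Fin n) (ZMod q)} :
    paramMap d n q (γ, U) = R ↔
      (map (Int.castRingHom (ZMod q)) γ).val * R =
        fromRows (0 : Matrix (Fin (d - n)) (Fin n) (ZMod q))
          (U : Matrix (Fin n) (Fin n) (ZMod q)) := by
  rw [paramMap_apply]
  constructor
  · rintro rfl
    rw [← Matrix.mul_assoc, ← coe_mul, ← map_mul, mul_inv_cancel, map_one, coe_one,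
      Matrix.one_mul]
  · intro h
    rw [← h, ← Matrix.mul_assoc, ← coe_mul, ← map_mul, inv_mul_cancel, map_one, coe_one,
      Matrix.one_mul]

theorem surjective_vecMul_paramMap (γ : SpecialLinearGroup (Fin (d - n) ⊕ Fin n) ℤ)
    (U : (Matrix (Fin n) (Fin n) (ZMod q))ˣ) :
    Function.Surjective (paramMap d n q (γ, U)).vecMul := by
  rw [paramMap_apply]
  exact surjective_vecMul_mul_of_isUnit (isUnit_coe _)
    (surjective_vecMul_fromRows_zero_iff.2 U.isUnit)

theorem mul_inv_mem_Gamma0_of_paramMap_eq {γ γ' : SpecialLinearGroup (Fin (d - n) ⊕ Fin n) ℤ}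
    {U U' : (Matrix (Fin n) (Fin n) (ZMod q))ˣ}
    (h : paramMap d n q (γ, U) = paramMap d n q (γ', U')) : γ' * γ⁻¹ ∈ Gamma0 d n q := by
  have hU := paramMap_eq_iff.1 (rfl : paramMap d n q (γ, U) = _)
  have hU' := paramMap_eq_iff.1 h.symm
  refine mem_Gamma0_iff.2 (toBlocks₁₂_eq_zero_of_mul_fromRows_zero (U := U) (V := U') ?_)
  rw [← hU, ← Matrix.mul_assoc, ← coe_mul, ← map_mul, inv_mul_cancel_right, hU']

theorem exists_paramMap_eq [NeZero q] {γ σ : SpecialLinearGroup (Fin (d - n) ⊕ Fin n) ℤ}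
    {R : Matrix (Fin (d - n) ⊕ Fin n) (Fin n) (ZMod q)} (hR : Function.Surjective R.vecMul)
    (hσ : ((map (Int.castRingHom (ZMod q)) σ).val * R).toRows₁ = 0)
    (hγσ : γ * σ⁻¹ ∈ Gamma0 d n q) :
    ∃ U, paramMap d n q (γ, U) = R := by
  set X := (map (Int.castRingHom (ZMod q)) γ).val * R
  have hX : X.toRows₁ = 0 := by
    have : X = (map (Int.castRingHom (ZMod q)) (γ * σ⁻¹)).val *
        ((map (Int.castRingHom (ZMod q)) σ).val * R) := by
      rw [← Matrix.mul_assoc, ← coe_mul, ← map_mul, inv_mul_cancel_right]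
    rw [this]
    exact toRows₁_mul_eq_zero (mem_Gamma0_iff.1 hγσ) hσ
  have hunit : IsUnit X.toRows₂ := by
    rw [← surjective_vecMul_fromRows_zero_iff (ι := Fin (d - n)), ← hX, fromRows_toRows]
    exact surjective_vecMul_mul_of_isUnit (isUnit_coe _) hR
  refine ⟨hunit.unit, paramMap_eq_iff.2 ?_⟩
  rw [hunit.unit_spec, ← hX, fromRows_toRows]

end

theorem param_of_primitive_matrices (d n q : ℕ) (hq : 0 < q)
    (B : Set (Matrix.SpecialLinearGroup (Fin (d - n) ⊕ Fin n) ℤ))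
    (hB : ∀ γ : Matrix.SpecialLinearGroup (Fin (d - n) ⊕ Fin n) ℤ,
      ∃! b, b ∈ B ∧ b * γ⁻¹ ∈ Gamma0 d n q) :
    Set.InjOn (paramMap d n q) (B ×ˢ Set.univ) ∧
    paramMap d n q '' (B ×ˢ Set.univ) =
      {R : Matrix (Fin (d - n) ⊕ Fin n) (Fin n) (ZMod q) |
        Submodule.span (ZMod q) (Set.range fun i => R i) = ⊤} := by
  have : NeZero q := ⟨hq.ne'⟩
  refine ⟨?_, ?_⟩
  · rintro ⟨γ, U⟩ ⟨hγ, -⟩ ⟨γ', U'⟩ ⟨hγ', -⟩ h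
    obtain rfl : γ = γ' := (hB γ).unique ⟨hγ, by rw [mul_inv_cancel]; exact one_mem_Gamma0⟩
      ⟨hγ', mul_inv_mem_Gamma0_of_paramMap_eq h⟩
    have hU := paramMap_eq_iff.1 h
    rw [paramMap_eq_iff.1 (rfl : paramMap d n q (γ, U') = _)] at hU
    rw [Units.ext (fromRows_inj hU).2]
  · ext R
    rw [Set.mem_ofPred_eq, span_range_eq_top_iff_surjective_vecMul]
    constructor
    · rintro ⟨⟨γ, U⟩, -, rfl⟩
      exact surjective_vecMul_paramMap γ U
    · intro hR
      obtain ⟨σ, hσ⟩ := exists_map_mul_toRows₁_eq_zero hR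
      obtain ⟨γ, ⟨hγ, hγσ⟩, -⟩ := hB σ
      obtain ⟨U, hU⟩ := exists_paramMap_eq hR hσ hγσ
      exact ⟨(γ, U), ⟨hγ, trivial⟩, hU⟩
end
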